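/- arXiv:2109.07186 — 2 statements merged into one kernel-verified Lean document; each statement's English description precedes it below -/
import Mathlib

section
/- Let W = ℤ/2 ∗ ℤ/2 ∗ ℤ/2 be the free product of three copies of the cyclic group of order 2, with canonical generators a₁, a₂, a₃ (the images of the nontrivial elements of the three factors). Let Y be the graph with vertex set W in which two distinct elements x, y are adjacent if and only if x⁻¹y belongs to ⟨a₁,a₂⟩ ∪ ⟨a₂,a₃⟩ ∪ ⟨a₁,a₃⟩ (the union of the three subgroups generated by two of the generators). Then Y is connected and has infinite diameter: for every n ∈ ℕ there exists g ∈ W whose graph-distance in Y from the identity is greater than n. In particular, the elements (a₁a₂a₃)^k, k ∈ ℕ, are at unbounded distance from the identity in Y. -/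
/-!
Every element of `W` has a normal form, a word in the letters `0, 1, 2` with no two
equal neighbours; it is obtained by letting `W` act on such words (van der Waerden's trick).
Let `T g` count the windows of three consecutive pairwise distinct letters in the normal form of
`g`. Right multiplication by an element of a dihedral subgroup `⟨a_i, a_j⟩` keeps a prefix of
the normal form and replaces the rest by a word alternating in `i` and `j`, so `T` grows by at
most `2` along each edge of `Y`. As `T ((a₁a₂a₃) ^ (k + 1)) = 3k + 1`, this element is at
distance more than `k` from `1`.
-/

/-- The cyclic group of order 2, written multiplicatively. -/
abbrev Z2 : Type := Multiplicative (ZMod 2)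

/-- The free product `W = ℤ/2 ∗ ℤ/2 ∗ ℤ/2`. -/
abbrev W : Type := Monoid.CoprodI (fun _ : Fin 3 => Z2)

/-- The canonical generators of `W`: the images of the nontrivial elements of the three
free factors. -/
def gen (i : Fin 3) : W :=
  Monoid.CoprodI.of (M := fun _ : Fin 3 => Z2) (i := i) (Multiplicative.ofAdd 1)

/-- The union of the three subgroups generated by two of the generators. -/
def S : Set W :=
  ↑(Subgroup.closure {gen 0, gen 1}) ∪ ↑(Subgroup.closure {gen 1, gen 2}) ∪
    ↑(Subgroup.closure {gen 0, gen 2})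

/-- The cone-off graph: vertices are elements of `W`, and two distinct elements `x, y`
are adjacent exactly when `x⁻¹y` lies in one of the three dihedral subgroups. -/
def Y : SimpleGraph W := SimpleGraph.fromRel (fun x y => x⁻¹ * y ∈ S)

section ReducedWords

variable {α : Type*} [DecidableEq α]

def reduceCons (a : α) : List α → List α
  | [] => [a]
  | b :: t => if b = a then t else a :: b :: t

lemma reduceCons_of_head_ne {a : α} {L : List α} (h : ∀ b ∈ L.head?, b ≠ a) :
    reduceCons a L = a :: L := by
  cases L with
  | nil => rfl
  | cons b t => exact if_neg (h b rfl)

lemma isChain_reduceCons (a : α) {L : List α} (h : L.IsChain (· ≠ ·)) :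
    (reduceCons a L).IsChain (· ≠ ·) := by
  cases L with
  | nil => exact List.isChain_singleton a
  | cons b t =>
    simp only [reduceCons]
    split_ifs with hb
    · exact h.tail
    · exact List.isChain_cons_cons.2 ⟨Ne.symm hb, h⟩

lemma reduceCons_reduceCons (a : α) {L : List α} (h : L.IsChain (· ≠ ·)) :
    reduceCons a (reduceCons a L) = L := by
  cases L with
  | nil => simp [reduceCons]
  | cons b t =>
    simp only [reduceCons]
    split_ifs with hb
    · subst hb
      exact reduceCons_of_head_ne fun c hc => (List.isChain_cons.1 h).1 c hc |>.symm
    · simp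

def tripleCount : List α → ℕ
  | a :: b :: c :: t => (if a ≠ b ∧ b ≠ c ∧ a ≠ c then 1 else 0) + tripleCount (b :: c :: t)
  | _ => 0

lemma tripleCount_cons_le (a : α) (L : List α) : tripleCount (a :: L) ≤ tripleCount L + 1 := by
  match L with
  | [] | [_] => simp [tripleCount]
  | _ :: _ :: _ => rw [tripleCount]; split <;> omega

lemma tripleCount_append_le (A B : List α) :
    tripleCount (A ++ B) ≤ tripleCount A + tripleCount B + 2 := by
  match A with
  | [] => simp [tripleCount]
  | [a] => simpa [tripleCount] using (tripleCount_cons_le a B).trans (by omega)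
  | [a, b] =>
    simpa [tripleCount] using (tripleCount_cons_le a (b :: B)).trans
      (Nat.add_le_add_right (tripleCount_cons_le b B) 1)
  | a :: b :: c :: t =>
    have := tripleCount_append_le (b :: c :: t) B
    simp only [List.cons_append, tripleCount] at this ⊢
    omega

lemma tripleCount_le_append (A B : List α) : tripleCount A ≤ tripleCount (A ++ B) := by
  match A with
  | [] | [_] | [_, _] => simp [tripleCount]
  | a :: b :: c :: t =>
    have := tripleCount_le_append (b :: c :: t) B
    simp only [List.cons_append, tripleCount] at this ⊢
    omega

lemma List.IsPrefix.tripleCount_le {A L : List α} (h : A <+: L) :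
    tripleCount A ≤ tripleCount L := by
  obtain ⟨C, rfl⟩ := h
  exact tripleCount_le_append A C

lemma tripleCount_eq_zero_of_forall_mem_pair {i j : α} {B : List α}
    (h : ∀ x ∈ B, x ∈ ({i, j} : Set α)) : tripleCount B = 0 := by
  match B with
  | [] | [_] | [_, _] => rfl
  | a :: b :: c :: t =>
    have htail := tripleCount_eq_zero_of_forall_mem_pair (B := b :: c :: t)
      fun x hx => h x (List.mem_cons_of_mem a hx)
    have hrainbow : ¬ (a ≠ b ∧ b ≠ c ∧ a ≠ c) := by
      rcases h a (by simp) with rfl | rfl <;> rcases h b (by simp) with rfl | rfl <;>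
        rcases h c (by simp) with rfl | rfl <;> tauto
    rw [tripleCount, if_neg hrainbow, htail]

lemma exists_foldr_reduceCons_eq_append (s : Set α) {U M : List α} (hU : U.IsChain (· ≠ ·))
    (hM : ∀ x ∈ M, x ∈ s) :
    ∃ A B, U.foldr reduceCons M = A ++ B ∧ A <+: U ∧ ∀ x ∈ B, x ∈ s := by
  induction U with
  | nil => exact ⟨[], M, rfl, List.nil_prefix, hM⟩
  | cons u U ih =>
    obtain ⟨hu, hU⟩ := List.isChain_cons.1 hU
    obtain ⟨A, B, hAB, hAU, hB⟩ := ih hU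
    rw [List.foldr_cons, hAB]
    cases A with
    | cons a A =>
      have hau : a ≠ u := by
        obtain ⟨C, rfl⟩ := hAU
        exact (hu a (by simp)).symm
      refine ⟨u :: a :: A, B, ?_, (List.prefix_cons_inj u).2 hAU, hB⟩
      simp [reduceCons, hau]
    | nil =>
      cases B with
      | nil => exact ⟨[u], [], rfl, by simp, by simp⟩
      | cons b B =>
        by_cases hbu : b = u
        · exact ⟨[], B, by simp [reduceCons, hbu], List.nil_prefix,
            fun x hx => hB x (List.mem_cons_of_mem b hx)⟩
        · exact ⟨[u], b :: B, by simp [reduceCons, hbu], by simp, hB⟩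

end ReducedWords

def involutionHom {G : Type*} [Monoid G] (g : G) (hg : g * g = 1) :
    Multiplicative (ZMod 2) →* G where
  toFun m := g ^ m.toAdd.val
  map_one' := pow_zero g
  map_mul' a b := by
    have pow_mod_two (n : ℕ) : g ^ (n % 2) = g ^ n := by
      conv_rhs => rw [← Nat.mod_add_div n 2, pow_add, pow_mul, sq, hg, one_pow, mul_one]
    rw [toAdd_mul, ZMod.val_add, pow_mod_two, pow_add]

lemma involutionHom_ofAdd_one {G : Type*} [Monoid G] (g : G) (hg : g * g = 1) :
    involutionHom g hg (Multiplicative.ofAdd 1) = g :=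
  pow_one g

lemma SimpleGraph.Walk.le_add_mul_length {V : Type*} {G : SimpleGraph V} (f : V → ℕ) (c : ℕ)
    (hf : ∀ x y, G.Adj x y → f y ≤ f x + c) {x y : V} (p : G.Walk x y) :
    f y ≤ f x + c * p.length := by
  induction p with
  | nil => simp
  | cons h p ih =>
    rw [SimpleGraph.Walk.length_cons, mul_add_one]
    have := hf _ _ h
    omega

lemma SimpleGraph.Reachable.le_add_mul_dist {V : Type*} {G : SimpleGraph V} (f : V → ℕ)
    (c : ℕ) (hf : ∀ x y, G.Adj x y → f y ≤ f x + c) {x y : V} (h : G.Reachable x y) :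
    f y ≤ f x + c * G.dist x y := by
  obtain ⟨p, hp⟩ := h.exists_walk_length_eq_dist
  exact hp ▸ p.le_add_mul_length f c hf

abbrev ReducedWord : Type := {L : List (Fin 3) // L.IsChain (· ≠ ·)}

def letterPerm (i : Fin 3) : Equiv.Perm ReducedWord :=
  Function.Involutive.toPerm (fun x => ⟨reduceCons i x.1, isChain_reduceCons i x.2⟩)
    fun x => Subtype.ext (reduceCons_reduceCons i x.2)

lemma letterPerm_mul_self (i : Fin 3) : letterPerm i * letterPerm i = 1 :=
  Equiv.ext fun x => Subtype.ext (reduceCons_reduceCons i x.2)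

def wordAction : W →* Equiv.Perm ReducedWord :=
  Monoid.CoprodI.lift fun i => involutionHom (letterPerm i) (letterPerm_mul_self i)

def normalForm (g : W) : List (Fin 3) := (wordAction g ⟨[], List.isChain_nil⟩).1

lemma isChain_normalForm (g : W) : (normalForm g).IsChain (· ≠ ·) :=
  (wordAction g _).2

lemma wordAction_gen (i : Fin 3) : wordAction (gen i) = letterPerm i := by
  rw [gen, wordAction, Monoid.CoprodI.lift_of, involutionHom_ofAdd_one]

lemma gen_mul_self (i : Fin 3) : gen i * gen i = 1 := by
  rw [gen, ← map_mul, ← ofAdd_add, show (1 : ZMod 2) + 1 = 0 from rfl, ofAdd_zero, map_one]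

lemma gen_inv (i : Fin 3) : (gen i)⁻¹ = gen i :=
  inv_eq_of_mul_eq_one_right (gen_mul_self i)

lemma gen_induction {p : W → Prop} (g : W) (one : p 1) (gen_mul : ∀ i g, p g → p (gen i * g)) :
    p g := by
  induction g using Monoid.CoprodI.induction_left with
  | one => exact one
  | @mul i m g hg =>
    rcases (by decide : ∀ m : Z2, m = 1 ∨ m = Multiplicative.ofAdd 1) m with rfl | rfl
    · rwa [map_one, one_mul]
    · exact gen_mul i g hg

lemma prod_map_gen_reduceCons (i : Fin 3) (L : List (Fin 3)) :
    ((reduceCons i L).map gen).prod = gen i * (L.map gen).prod := by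
  cases L with
  | nil => simp [reduceCons]
  | cons a t =>
    simp only [reduceCons]
    split_ifs with ha
    · rw [ha, List.map_cons, List.prod_cons, ← mul_assoc, gen_mul_self, one_mul]
    · simp

lemma wordAction_prod_map_gen (U : List (Fin 3)) (x : ReducedWord) :
    (wordAction (U.map gen).prod x).1 = U.foldr reduceCons x.1 := by
  induction U with
  | nil => simp
  | cons i U ih =>
    rw [List.map_cons, List.prod_cons, map_mul, Equiv.Perm.mul_apply, wordAction_gen,
      List.foldr_cons, ← ih]
    rfl

lemma prod_map_gen_normalForm (g : W) : ((normalForm g).map gen).prod = g := by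
  suffices ∀ x, ((wordAction g x).1.map gen).prod = g * (x.1.map gen).prod by
    simpa [normalForm] using this ⟨[], List.isChain_nil⟩
  induction g using gen_induction with
  | one => simp
  | gen_mul i g ih =>
    intro x
    rw [map_mul, Equiv.Perm.mul_apply, wordAction_gen, mul_assoc, ← ih]
    exact prod_map_gen_reduceCons i _

lemma normalForm_mul (a b : W) :
    normalForm (a * b) = (normalForm a).foldr reduceCons (normalForm b) := by
  conv_lhs => rw [normalForm, map_mul, Equiv.Perm.mul_apply, ← prod_map_gen_normalForm a]
  exact wordAction_prod_map_gen _ _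

lemma normalForm_one : normalForm 1 = [] := rfl

lemma normalForm_gen (i : Fin 3) : normalForm (gen i) = [i] := by
  rw [normalForm, wordAction_gen]
  rfl

lemma gen_ne_one (i : Fin 3) : gen i ≠ 1 := fun h => by
  simpa [normalForm_gen, normalForm_one] using congrArg normalForm h

lemma normalForm_mem_of_mem_closure {i j : Fin 3} {h : W}
    (hh : h ∈ Subgroup.closure {gen i, gen j}) : ∀ x ∈ normalForm h, x ∈ ({i, j} : Set (Fin 3)) := by
  induction hh using Subgroup.closure_induction'' with
  | mem g hg | inv_mem g hg =>
    rcases hg with rfl | rfl <;> simp [gen_inv, normalForm_gen]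
  | one => simp [normalForm_one]
  | mul a b _ _ ha hb =>
    obtain ⟨A, B, hAB, hA, hB⟩ := exists_foldr_reduceCons_eq_append _ (isChain_normalForm a) hb
    rw [normalForm_mul, hAB]
    intro x hx
    rcases List.mem_append.1 hx with hx | hx
    · exact ha x (hA.subset hx)
    · exact hB x hx

lemma exists_mem_closure_of_adj {x y : W} (h : Y.Adj x y) :
    ∃ i j : Fin 3, x⁻¹ * y ∈ Subgroup.closure {gen i, gen j} := by
  have mem_S {g : W} (hg : g ∈ S) : ∃ i j : Fin 3, g ∈ Subgroup.closure {gen i, gen j} := by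
    rcases hg with (hg | hg) | hg
    exacts [⟨0, 1, hg⟩, ⟨1, 2, hg⟩, ⟨0, 2, hg⟩]
  rcases (SimpleGraph.fromRel_adj _ _ _).1 h |>.2 with hxy | hyx
  · exact mem_S hxy
  · obtain ⟨i, j, hij⟩ := mem_S hyx
    exact ⟨i, j, by simpa using inv_mem hij⟩

lemma tripleCount_normalForm_le_of_adj {x y : W} (h : Y.Adj x y) :
    tripleCount (normalForm y) ≤ tripleCount (normalForm x) + 2 := by
  obtain ⟨i, j, hij⟩ := exists_mem_closure_of_adj h
  obtain ⟨A, B, hAB, hA, hB⟩ := exists_foldr_reduceCons_eq_append _ (isChain_normalForm x)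
    (normalForm_mem_of_mem_closure hij)
  rw [← normalForm_mul, mul_inv_cancel_left] at hAB
  calc tripleCount (normalForm y) ≤ tripleCount A + tripleCount B + 2 :=
        hAB ▸ tripleCount_append_le A B
    _ = tripleCount A + 2 := by rw [tripleCount_eq_zero_of_forall_mem_pair hB, add_zero]
    _ ≤ tripleCount (normalForm x) + 2 := by grw [hA.tripleCount_le]

lemma adj_mul_gen (x : W) (i : Fin 3) : Y.Adj x (x * gen i) := by
  refine (SimpleGraph.fromRel_adj _ _ _).2 ⟨fun h => gen_ne_one i (left_eq_mul.1 h), Or.inl ?_⟩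
  rw [inv_mul_cancel_left]
  fin_cases i
  · exact Or.inl (Or.inl (Subgroup.subset_closure (by simp)))
  · exact Or.inl (Or.inl (Subgroup.subset_closure (by simp)))
  · exact Or.inl (Or.inr (Subgroup.subset_closure (by simp)))

lemma Y_connected : Y.Connected := by
  refine (SimpleGraph.connected_iff_exists_forall_reachable _).2 ⟨1, fun g => ?_⟩
  rw [← prod_map_gen_normalForm g]
  induction normalForm g using List.reverseRecOn with
  | nil => rfl
  | append_singleton U i ih =>
    rw [List.map_append, List.prod_append, List.map_singleton, List.prod_singleton]
    exact ih.trans (adj_mul_gen _ i).reachable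

lemma normalForm_pow (k : ℕ) :
    normalForm ((gen 0 * gen 1 * gen 2) ^ k) = (List.replicate k [0, 1, 2]).flatten := by
  induction k with
  | zero => rfl
  | succ k ih =>
    rw [pow_succ', normalForm_mul, normalForm_mul, normalForm_mul, normalForm_gen, normalForm_gen,
      normalForm_gen, ih]
    cases k <;> rfl

lemma tripleCount_flatten_replicate (k : ℕ) :
    tripleCount (List.replicate (k + 1) [(0 : Fin 3), 1, 2]).flatten = 3 * k + 1 := by
  induction k with
  | zero => rfl
  | succ k ih =>
    have unfold_once (m : ℕ) : (List.replicate (m + 1) [(0 : Fin 3), 1, 2]).flatten =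
        0 :: 1 :: 2 :: (List.replicate m [0, 1, 2]).flatten := rfl
    rw [unfold_once, tripleCount, unfold_once, tripleCount, tripleCount, ← unfold_once, ih]
    rw [if_pos (by decide), if_pos (by decide), if_pos (by decide)]
    omega

/-- The cone-off `Y` of `ℤ/2 ∗ ℤ/2 ∗ ℤ/2` over the cosets of the three subgroups
`⟨a₁,a₂⟩, ⟨a₂,a₃⟩, ⟨a₁,a₃⟩` is connected but has infinite diameter; in particular the
elements `(a₁a₂a₃)^k` are at unbounded distance from the identity. -/
theorem coneoff_of_Z2Z2Z2_unbounded :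
    Y.Connected ∧
    (∀ n : ℕ, ∃ g : W, n < Y.dist 1 g) ∧
    (∀ n : ℕ, ∃ k : ℕ, n < Y.dist 1 ((gen 0 * gen 1 * gen 2) ^ k)) := by
  have far (n : ℕ) : n < Y.dist 1 ((gen 0 * gen 1 * gen 2) ^ (n + 1)) := by
    have := (Y_connected.preconnected 1 ((gen 0 * gen 1 * gen 2) ^ (n + 1))).le_add_mul_dist
      (fun g => tripleCount (normalForm g)) 2 fun _ _ => tripleCount_normalForm_le_of_adj
    simp only [normalForm_pow, normalForm_one, tripleCount_flatten_replicate] at this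
    change 3 * n + 1 ≤ 0 + _ at this
    omega
  exact ⟨Y_connected, fun n => ⟨_, far n⟩, fun n => ⟨n + 1, far n⟩⟩
end

section
/- Let W = ℤ/2 ∗ ℤ/2 ∗ ℤ/2 be the free product of three copies of the cyclic group of order 2, with canonical generators a, b, c (the images of the nontrivial elements of the three factors). For every n ∈ ℕ, any expression of the element (abc)^n as a product of a finite list of elements each belonging to {a, b, c} has length at least 3n; that is, if l is a list of elements of W with every entry equal to a, b, or c and with product (abc)^n, then the length of l is at least 3n. -/
/-! Every element of a free product has a unique reduced word, and left multiplication by an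
element of a single factor changes the length of that word by at most one. So a product of `k`
generators has reduced length at most `k`, while `abc ⋯ abc` is itself reduced, of length `3n`. -/

open Monoid.CoprodI

namespace Monoid.CoprodI

variable {ι : Type*} {M : ι → Type*} [∀ i, Monoid (M i)] [∀ i, DecidableEq (M i)]

namespace Word

theorem length_rcons_le {i : ι} (p : Pair M i) :
    (rcons p).toList.length ≤ p.tail.toList.length + 1 := by
  unfold rcons
  split
  · omega
  · simp only [cons_toList, List.length_cons, le_refl]

variable [DecidableEq ι]

theorem length_equivPair_tail_le (i : ι) (w : Word M) :
    (equivPair i w).tail.toList.length ≤ w.toList.length := by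
  conv_rhs => rw [← (equivPair i).symm_apply_apply w, equivPair_symm]
  unfold rcons
  split
  · rfl
  · simp only [cons_toList, List.length_cons, Nat.le_succ]

theorem length_of_smul_le {i : ι} (m : M i) (w : Word M) :
    (of m • w).toList.length ≤ w.toList.length + 1 := by
  rw [of_smul_def]
  exact (length_rcons_le _).trans (Nat.add_le_add_right (length_equivPair_tail_le i w) 1)

end Word

variable [DecidableEq ι]

noncomputable def wordLength (x : CoprodI M) : ℕ :=
  (Word.equiv x).toList.length

theorem wordLength_prod (w : Word M) : wordLength w.prod = w.toList.length :=
  congrArg (fun w : Word M => w.toList.length) (Word.equiv.apply_symm_apply w)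

theorem wordLength_of_mul_le {i : ι} (m : M i) (x : CoprodI M) :
    wordLength (of m * x) ≤ wordLength x + 1 := by
  -- `Word.equiv x` is `x • Word.empty` by definition.
  have hsmul : Word.equiv (of m * x) = of m • Word.equiv x :=
    mul_smul (of m) x (Word.empty : Word M)
  rw [wordLength, hsmul]
  exact Word.length_of_smul_le m _

theorem wordLength_list_prod_le (l : List (CoprodI M))
    (hl : ∀ x ∈ l, ∃ i, ∃ m : M i, of m = x) : wordLength l.prod ≤ l.length := by
  induction l with
  | nil => exact (wordLength_prod Word.empty).le
  | cons x l ih =>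
    obtain ⟨i, m, rfl⟩ := hl x List.mem_cons_self
    rw [List.prod_cons, List.length_cons]
    exact (wordLength_of_mul_le m l.prod).trans
      (Nat.add_le_add_right (ih fun y hy => hl y (List.mem_cons_of_mem _ hy)) 1)

end Monoid.CoprodI

theorem ofAdd_one_ne_one : Multiplicative.ofAdd (1 : ZMod 2) ≠ 1 := by decide

theorem exists_word_abc_pow (n : ℕ) :
    ∃ w : Word (fun _ : Fin 3 => Z2), w.prod = (gen 0 * gen 1 * gen 2) ^ n ∧
      w.toList.length = 3 * n ∧ w.fstIdx ≠ some 2 := by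
  induction n with
  | zero => exact ⟨Word.empty, rfl, rfl, by simp [Word.fstIdx]⟩
  | succ n ih =>
    obtain ⟨w, hprod, hlen, hfst⟩ := ih
    let wc := Word.cons (i := 2) _ w hfst ofAdd_one_ne_one
    let wbc := Word.cons (i := 1) _ wc (by simp [wc]) ofAdd_one_ne_one
    let wabc := Word.cons (i := 0) _ wbc (by simp [wbc]) ofAdd_one_ne_one
    refine ⟨wabc, ?_, ?_, by simp [wabc]⟩
    · simp only [wabc, wbc, wc, Word.prod_cons, hprod, pow_succ', gen, mul_assoc]
    · simp only [wabc, wbc, wc, Word.cons_toList, List.length_cons, hlen]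
      ring

theorem wordLength_abc_pow (n : ℕ) : wordLength ((gen 0 * gen 1 * gen 2) ^ n) = 3 * n := by
  obtain ⟨w, hprod, hlen, -⟩ := exists_word_abc_pow n
  rw [← hprod, wordLength_prod, hlen]

/-- In `W = ℤ/2 ∗ ℤ/2 ∗ ℤ/2` with canonical generators `a, b, c`, any expression of
`(abc)^n` as a product of generators has length at least `3n`: the word `(abc)^n` is
geodesic with respect to `{a,b,c}`. -/
theorem abc_pow_geodesic (n : ℕ) (l : List W)
    (hl : ∀ x ∈ l, x = gen 0 ∨ x = gen 1 ∨ x = gen 2)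
    (hprod : l.prod = (gen 0 * gen 1 * gen 2) ^ n) :
    3 * n ≤ l.length := by
  calc 3 * n = wordLength l.prod := by rw [hprod, wordLength_abc_pow]
    _ ≤ l.length := wordLength_list_prod_le l fun x hx => by
      rcases hl x hx with rfl | rfl | rfl <;> exact ⟨_, _, rfl⟩
end
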